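/- For every T ∈ M_r(ℂ), λ ∈ (0,1), and μ ∈ σ(T), the geometric multiplicity satisfies dim ker(T − μI) ≤ dim ker(Δ_λ(T) − μI). Consequently, if T is diagonalizable then Δ_λ(T) is diagonalizable. -/

import Mathlib

open Matrix
open scoped ComplexOrder

/-- `|T| = (Tᴴ T)^{1/2}`, the positive semidefinite absolute value of a matrix. -/
noncomputable def matAbs {n : Type*} [Fintype n] [DecidableEq n]
    (T : Matrix n n ℂ) : Matrix n n ℂ :=
  ((Matrix.posSemidef_conjTranspose_mul_self T).1.eigenvectorUnitary : Matrix n n ℂ) *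
    diagonal ((↑) ∘ (Real.sqrt ∘ (Matrix.posSemidef_conjTranspose_mul_self T).1.eigenvalues)) *
    (star ((Matrix.posSemidef_conjTranspose_mul_self T).1.eigenvectorUnitary : Matrix n n ℂ))

/-- Real power `P^l` of a Hermitian matrix, via the functional calculus
(junk value `0` if `P` is not Hermitian). -/
noncomputable def hermPow {n : Type*} [Fintype n] [DecidableEq n]
    (P : Matrix n n ℂ) (l : ℝ) : Matrix n n ℂ :=
  if h : P.IsHermitian then h.cfc (fun x : ℝ => x ^ l) else 0

/-- The λ-Aluthge transform `|T|^λ U |T|^{1-λ}`, where `U` is a polar part of `T`. -/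
noncomputable def aluthge {n : Type*} [Fintype n] [DecidableEq n]
    (l : ℝ) (U T : Matrix n n ℂ) : Matrix n n ℂ :=
  hermPow (matAbs T) l * U * hermPow (matAbs T) (1 - l)

/-!
Write `P = |T|`, `A = P^λ` and `C = U P^{1-λ}`. Since `P^{1-λ} P^λ = P`, we get `T = C A` while
`Δ_λ(T) = A C`, and `ker T = ker P ⊆ ker P^{1-λ} = ker C`. For such a pair, `A` maps
`ker (C A - μ)` injectively into `ker (A C - μ)` when `μ ≠ 0`, and `ker (C A) ⊆ ker C ⊆ ker (A C)`.
If `C A S = S D` with `D` diagonal, replacing the columns `s` of `S` outside `ker (C A)` by `A s`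
gives an invertible `W` with `A C W = W D`.
-/

namespace Matrix

section Field

variable {K n : Type*} [Field K] [Fintype n] {A C : Matrix n n K}

lemma mul_eq_zero_of_mul_mul_eq_zero {m : Type*} [Fintype m]
    (hker : ∀ x, C *ᵥ (A *ᵥ x) = 0 → C *ᵥ x = 0) {X : Matrix n m K} (hX : C * A * X = 0) :
    C * X = 0 := by
  refine ext_iff_mulVec.2 fun v => ?_
  rw [← mulVec_mulVec, zero_mulVec]
  exact hker _ (by rw [mulVec_mulVec, mulVec_mulVec, hX, zero_mulVec])

variable [DecidableEq n]

lemma mem_ker_mulVecLin_sub_smul_one {M : Matrix n n K} {μ : K} {x : n → K} :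
    x ∈ LinearMap.ker (M - μ • 1).mulVecLin ↔ M *ᵥ x = μ • x := by
  rw [LinearMap.mem_ker, mulVecLin_apply, sub_mulVec, smul_mulVec, one_mulVec, sub_eq_zero]

lemma finrank_ker_mul_sub_smul_one_le_of_ne_zero {μ : K} (hμ : μ ≠ 0) :
    Module.finrank K (LinearMap.ker (C * A - μ • 1).mulVecLin) ≤
      Module.finrank K (LinearMap.ker (A * C - μ • 1).mulVecLin) := by
  have hmaps : ∀ x ∈ LinearMap.ker (C * A - μ • 1).mulVecLin,
      A.mulVecLin x ∈ LinearMap.ker (A * C - μ • 1).mulVecLin := by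
    intro x hx
    rw [mem_ker_mulVecLin_sub_smul_one] at hx ⊢
    rw [mulVecLin_apply, mulVec_mulVec, mul_assoc, ← mulVec_mulVec, hx, mulVec_smul]
  refine LinearMap.finrank_le_finrank_of_injective (f := A.mulVecLin.restrict hmaps) ?_
  refine (injective_iff_map_eq_zero _).2 fun ⟨x, hx⟩ hAx => ?_
  have hAx : A *ᵥ x = 0 := congrArg Subtype.val hAx
  rw [mem_ker_mulVecLin_sub_smul_one, ← mulVec_mulVec, hAx, mulVec_zero] at hx
  exact Subtype.ext (smul_eq_zero.1 hx.symm |>.resolve_left hμ)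

lemma finrank_ker_mul_sub_smul_one_le (hker : ∀ x, C *ᵥ (A *ᵥ x) = 0 → C *ᵥ x = 0) (μ : K) :
    Module.finrank K (LinearMap.ker (C * A - μ • 1).mulVecLin) ≤
      Module.finrank K (LinearMap.ker (A * C - μ • 1).mulVecLin) := by
  rcases eq_or_ne μ 0 with rfl | hμ
  · refine Submodule.finrank_mono fun x hx => ?_
    rw [mem_ker_mulVecLin_sub_smul_one, zero_smul, ← mulVec_mulVec] at hx ⊢
    rw [hker x hx, mulVec_zero]
  · exact finrank_ker_mul_sub_smul_one_le_of_ne_zero hμ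

lemma exists_mul_swap_eq_conj_diagonal
    (hker : ∀ x, C *ᵥ (A *ᵥ x) = 0 → C *ᵥ x = 0) {S : (Matrix n n K)ˣ} {d : n → K}
    (h : C * A = S * diagonal d * (↑(S⁻¹) : Matrix n n K)) :
    ∃ W : (Matrix n n K)ˣ, A * C = W * diagonal d * (↑(W⁻¹) : Matrix n n K) := by
  rw [Units.eq_mul_inv_iff_mul_eq] at h
  set D := diagonal d
  -- as `0⁻¹ = 0`, `F` projects onto the coordinates where `d` does not vanish
  set F := diagonal d⁻¹ * D
  have hDF : D * F = D := by
    rw [← mul_assoc, diagonal_mul_diagonal, diagonal_mul_diagonal]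
    simp only [Pi.inv_apply, mul_inv_mul_cancel, D]
  have hFD : F * D = D := by
    rw [mul_assoc, diagonal_mul_diagonal, diagonal_mul_diagonal]
    simp only [Pi.inv_apply, ← mul_assoc, inv_mul_mul_self, D]
  have hCS : C * S * (1 - F) = 0 := by
    rw [mul_assoc]
    refine mul_eq_zero_of_mul_mul_eq_zero hker ?_
    rw [← mul_assoc, h, mul_assoc, mul_sub, mul_one, hDF, sub_self, mul_zero]
  -- the columns of `W` are those of `S` in the kernel of `C * A`, and `A` times the others
  set W := S * (1 - F) + A * S * F
  have hCW : C * W = S * D := by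
    rw [mul_add, ← mul_assoc, hCS, zero_add, ← mul_assoc C (A * S) F, ← mul_assoc C A S, h,
      mul_assoc, hDF]
  have hACW : A * C * W = W * D := by
    rw [mul_assoc, hCW, add_mul, mul_assoc _ F, hFD, mul_assoc _ (1 - F), sub_mul, one_mul, hFD,
      sub_self, mul_zero, zero_add, mul_assoc]
  have hW : IsUnit W := by
    refine mulVec_injective_iff_isUnit.1 <| (injective_iff_map_eq_zero W.mulVecLin).2 fun c hc => ?_
    have hc : W *ᵥ c = 0 := hc
    have hSinj : Function.Injective (S : Matrix n n K).mulVec :=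
      mulVec_injective_iff_isUnit.2 S.isUnit
    have hDc : D *ᵥ c = 0 := hSinj <| by
      rw [mulVec_mulVec, ← hCW, ← mulVec_mulVec, hc, mulVec_zero, mulVec_zero]
    have hFc : F *ᵥ c = 0 := by rw [← mulVec_mulVec, hDc, mulVec_zero]
    refine hSinj ?_
    rw [mulVec_zero, ← hc, add_mulVec, ← mulVec_mulVec c _ F, ← mulVec_mulVec c _ (1 - F), hFc,
      mulVec_zero, add_zero, sub_mulVec, one_mulVec, hFc, sub_zero]
  obtain ⟨W', hW'⟩ := hW
  exact ⟨W', by rw [Units.eq_mul_inv_iff_mul_eq, hW', hACW]⟩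

end Field

variable {n : Type*} [Fintype n] [DecidableEq n]

lemma matAbs_posSemidef (T : Matrix n n ℂ) : (matAbs T).PosSemidef :=
  (PosSemidef.diagonal fun _ => Complex.zero_le_real.mpr (Real.sqrt_nonneg _)).mul_mul_conjTranspose_same
    _

lemma hermPow_eq_cfc {P : Matrix n n ℂ} (hP : P.IsHermitian) (a : ℝ) :
    hermPow P a = cfc (fun x : ℝ => x ^ a) P := by
  rw [hermPow, dif_pos hP, hP.cfc_eq]

lemma hermPow_one {P : Matrix n n ℂ} (hP : P.IsHermitian) : hermPow P 1 = P := by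
  simp only [hermPow_eq_cfc hP, Real.rpow_one, cfc_id' ℝ P]

lemma hermPow_add {P : Matrix n n ℂ} (hP : P.PosSemidef) {a b : ℝ} (hab : a + b ≠ 0) :
    hermPow P (a + b) = hermPow P a * hermPow P b := by
  have hfin := P.finite_real_spectrum
  rw [hermPow_eq_cfc hP.1, hermPow_eq_cfc hP.1, hermPow_eq_cfc hP.1,
    ← cfc_mul _ _ _ (hfin.continuousOn _) (hfin.continuousOn _)]
  refine cfc_congr fun x hx => ?_
  obtain ⟨i, rfl⟩ := hP.1.spectrum_real_eq_range_eigenvalues ▸ hx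
  exact Real.rpow_add' (hP.eigenvalues_nonneg i) hab

lemma hermPow_mulVec_eq_zero {P : Matrix n n ℂ} (hP : P.PosSemidef) {a : ℝ} (ha : a ≠ 0)
    {x : n → ℂ} (hx : P *ᵥ x = 0) : hermPow P a *ᵥ x = 0 := by
  rw [← sub_add_cancel a 1, hermPow_add hP (by simpa), hermPow_one hP.1, ← mulVec_mulVec, hx,
    mulVec_zero]

end Matrix

/-- geometric multiplicities do not decrease under the λ-Aluthge transform;
consequently, if `T` is diagonalizable then so is `Δ_λ(T)`. -/
theorem geomMult_le_aluthge {r : ℕ} (l : ℝ) (hl : l ∈ Set.Ioo (0 : ℝ) 1)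
    (T U : Matrix (Fin r) (Fin r) ℂ)
    (hU : U ∈ Matrix.unitaryGroup (Fin r) ℂ) (hpolar : T = U * matAbs T) :
    (∀ μ ∈ spectrum ℂ T,
      Module.finrank ℂ (LinearMap.ker (Matrix.mulVecLin (T - μ • 1))) ≤
      Module.finrank ℂ (LinearMap.ker (Matrix.mulVecLin (aluthge l U T - μ • 1)))) ∧
    ((∃ S : (Matrix (Fin r) (Fin r) ℂ)ˣ, ∃ d : Fin r → ℂ,
        T = (S : Matrix (Fin r) (Fin r) ℂ) * Matrix.diagonal d *
          ((S⁻¹ : (Matrix (Fin r) (Fin r) ℂ)ˣ) : Matrix (Fin r) (Fin r) ℂ)) →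
      ∃ S : (Matrix (Fin r) (Fin r) ℂ)ˣ, ∃ d : Fin r → ℂ,
        aluthge l U T = (S : Matrix (Fin r) (Fin r) ℂ) * Matrix.diagonal d *
          ((S⁻¹ : (Matrix (Fin r) (Fin r) ℂ)ˣ) : Matrix (Fin r) (Fin r) ℂ)) := by
  set P := matAbs T
  have hP : P.PosSemidef := matAbs_posSemidef T
  have hl1 : 1 - l ≠ 0 := sub_ne_zero.2 hl.2.ne'
  set A := hermPow P l
  set C := U * hermPow P (1 - l)
  have hT : T = C * A := by
    rw [mul_assoc, ← hermPow_add hP (by simp), sub_add_cancel, hermPow_one hP.1, ← hpolar]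
  have hker : ∀ x, C *ᵥ (A *ᵥ x) = 0 → C *ᵥ x = 0 := by
    intro x hx
    rw [mulVec_mulVec, ← hT, hpolar, ← mulVec_mulVec] at hx
    have hPx : P *ᵥ x = 0 := by
      simpa [mulVec_mulVec, ← mul_assoc, (mem_unitaryGroup_iff').1 hU] using
        congrArg (star U *ᵥ ·) hx
    rw [← mulVec_mulVec, hermPow_mulVec_eq_zero hP hl1 hPx, mulVec_zero]
  have hΔ : aluthge l U T = A * C := mul_assoc _ _ _
  rw [hΔ, hT]
  exact ⟨fun μ _ => finrank_ker_mul_sub_smul_one_le hker μ,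
    fun ⟨S, d, h⟩ => (exists_mul_swap_eq_conj_diagonal hker h).imp fun _ h => ⟨d, h⟩⟩
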